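/- Let H = ℓ²(ℕ, ℂ) with standard orthonormal basis (e_n)_{n≥0}, and let S be the unilateral right shift, S e_n = e_{n+1}. Let α, β ∈ ℂ with (α, β) ≠ (0, 0), and set f = α e₁ + (β − 1) e₂ and g = e₀. Then for the isometry V = S² one has c(V; f, g) = |α|² + |β|², and consequently T = S² + f⊗g is left-invertible; moreover T is analytic. -/

import Mathlib

/-!
Write `T = V + f ⊗ g` with `V` an isometry and `u = V* f`. For `y = T x` one has
`V* y = x + ⟪g, x⟫ u`, `⟪f - V u, y⟫ = ⟪g, x⟫ ‖f - V u‖²` and `⟪V g, y⟫ = ⟪g, x⟫ (1 + ⟪g, u⟫)`;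
since `‖f - V u‖² = ‖f‖² - ‖u‖²`, the combination `‖g‖² ⟪f - V u, y⟫ + conj (1 + ⟪g, u⟫) ⟪V g, y⟫`
equals `c(V; f, g) ⟪g, x⟫`. So if `c ≠ 0`, a bounded operator recovers `⟪g, x⟫` and then `x`
from `T x`. For `V = S²`, `f = α e₁ + (β - 1) e₂`, `g = e₀` one finds `V* f = (β - 1) e₀`, whence
`c = |α|² + |β|²`.

Analyticity: `T x = S² x + x₀ f` with `f₀ = 0`, so if `x` vanishes in its first `n` coordinates
then `T x` vanishes in its first `n + 1`; a vector in the range of every `Tᵏ` is therefore zero.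
-/

open ContinuousLinearMap

/-- The rank-one operator `f ⊗ g : h ↦ ⟨h, g⟩ f` (inner product linear in the
first argument, i.e. `⟪g, h⟫ • f` in Mathlib's convention). -/
noncomputable def rankOne {H : Type*} [NormedAddCommGroup H] [InnerProductSpace ℂ H]
    (f g : H) : H →L[ℂ] H :=
  (innerSL ℂ g).smulRight f

open scoped InnerProductSpace ENNReal

section RankOnePerturbation

variable {H : Type*} [NormedAddCommGroup H] [InnerProductSpace ℂ H]

theorem rankOne_apply (f g x : H) : rankOne f g x = ⟪g, x⟫_ℂ • f := rfl

variable [CompleteSpace H]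

/-- The constant `c(V; f, g)`. -/
noncomputable def perturbationConstant (V : H →L[ℂ] H) (f g : H) : ℝ :=
  (‖f‖ ^ 2 - ‖adjoint V f‖ ^ 2) * ‖g‖ ^ 2 + ‖(1 : ℂ) + ⟪g, adjoint V f⟫_ℂ‖ ^ 2

variable {V : H →L[ℂ] H}

theorem adjoint_sq_comp_sq (hV : adjoint V ∘L V = 1) : adjoint (V ^ 2) ∘L V ^ 2 = 1 := by
  rw [pow_two, mul_def, adjoint_comp, comp_assoc, ← comp_assoc _ V V, hV, one_def, id_comp,
    ← one_def, hV]

theorem inner_sub_apply_adjoint_apply_apply (hV : adjoint V ∘L V = 1) (f x : H) :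
    ⟪f - V (adjoint V f), V x⟫_ℂ = 0 := by
  rw [← adjoint_inner_left, map_sub, ← comp_apply, hV, one_apply_eq_self, sub_self,
    inner_zero_left]

theorem norm_sq_sub_norm_adjoint_apply_sq (hV : adjoint V ∘L V = 1) (f : H) :
    ‖f‖ ^ 2 - ‖adjoint V f‖ ^ 2 = ‖f - V (adjoint V f)‖ ^ 2 := by
  have hpyth := norm_add_sq_eq_norm_sq_add_norm_sq_of_inner_eq_zero (𝕜 := ℂ) _ _
    (inner_sub_apply_adjoint_apply_apply hV f (adjoint V f))
  rw [sub_add_cancel, (norm_map_iff_adjoint_comp_self V).mpr hV] at hpyth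
  linear_combination hpyth

theorem inner_add_rankOne_apply (hV : adjoint V ∘L V = 1) (f g x : H) :
    ⟪(‖g‖ ^ 2 : ℂ) • (f - V (adjoint V f)) + ((1 : ℂ) + ⟪g, adjoint V f⟫_ℂ) • V g,
        (V + rankOne f g) x⟫_ℂ
      = perturbationConstant V f g * ⟪g, x⟫_ℂ := by
  set u := adjoint V f
  set γ : ℂ := 1 + ⟪g, u⟫_ℂ
  have hw : ⟪f - V u, f⟫_ℂ = ‖f - V u‖ ^ 2 := by
    nth_rewrite 2 [← sub_add_cancel f (V u)]
    rw [inner_add_right, inner_sub_apply_adjoint_apply_apply hV, add_zero,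
      inner_self_eq_norm_sq_to_K]
    rfl
  have hVg : ⟪V g, (V + rankOne f g) x⟫_ℂ = ⟪g, x⟫_ℂ * γ := by
    rw [← adjoint_inner_right V, add_apply, rankOne_apply, map_add, map_smul, ← comp_apply, hV,
      one_apply_eq_self, inner_add_right, inner_smul_right]
    ring
  rw [inner_add_left, inner_smul_left, inner_smul_left, hVg, add_apply, rankOne_apply,
    inner_add_right, inner_smul_right, inner_sub_apply_adjoint_apply_apply hV, hw,
    perturbationConstant, norm_sq_sub_norm_adjoint_apply_sq hV]
  push_cast
  rw [map_pow, Complex.conj_ofReal]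
  linear_combination ⟪g, x⟫_ℂ * Complex.conj_mul' γ

theorem exists_leftInverse_add_rankOne (hV : adjoint V ∘L V = 1) {f g : H}
    (hc : perturbationConstant V f g ≠ 0) :
    ∃ L : H →L[ℂ] H, L ∘L (V + rankOne f g) = 1 := by
  refine ⟨adjoint V - ((perturbationConstant V f g : ℂ)⁻¹ • rankOne (adjoint V f)
    ((‖g‖ ^ 2 : ℂ) • (f - V (adjoint V f)) + ((1 : ℂ) + ⟪g, adjoint V f⟫_ℂ) • V g)), ?_⟩
  ext1 x
  rw [comp_apply, sub_apply, smul_apply, rankOne_apply, inner_add_rankOne_apply hV, smul_smul,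
    inv_mul_cancel_left₀ (by exact_mod_cast hc), add_apply, map_add, rankOne_apply, map_smul,
    ← comp_apply, hV, one_apply_eq_self, add_sub_cancel_right]

end RankOnePerturbation

theorem lp.iInter_range_iterate_eq_singleton_zero {E : ℕ → Type*}
    [∀ i, NormedAddCommGroup (E i)] {p : ℝ≥0∞} (A : lp E p → lp E p)
    (hA : ∀ x n, (∀ i < n, x i = 0) → ∀ i < n + 1, A x i = 0) :
    ⋂ k, Set.range A^[k] = {0} := by
  have hA_zero : A 0 = 0 := lp.ext <| funext fun i ↦ hA 0 i (fun _ _ ↦ rfl) i (Nat.lt_succ_self i)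
  have hiterate : ∀ k x, ∀ i < k, A^[k] x i = 0 := by
    intro k
    induction k with
    | zero => intro x i hi; omega
    | succ k ih => intro x; rw [Function.iterate_succ_apply']; exact hA _ k (ih x)
  refine Set.eq_singleton_iff_unique_mem.mpr
    ⟨Set.mem_iInter.mpr fun k ↦ ⟨0, Function.iterate_fixed hA_zero k⟩, fun y hy ↦ ?_⟩
  ext i
  obtain ⟨x, rfl⟩ := Set.mem_iInter.mp hy (i + 1)
  exact hiterate (i + 1) x i (Nat.lt_succ_self i)

local notation "ℓ²" => lp (fun _ : ℕ => ℂ) 2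

theorem lp.inner_single_one_left (n : ℕ) (x : ℓ²) : ⟪lp.single 2 n (1 : ℂ), x⟫_ℂ = x n := by
  simp [lp.inner_single_left]

theorem lp.norm_single_one (n : ℕ) : ‖(lp.single 2 n (1 : ℂ) : ℓ²)‖ = 1 := by
  simp [lp.norm_single]

theorem lp.smul_single_add_smul_single_apply (a b : ℂ) (i j n : ℕ) :
    (a • lp.single 2 i 1 + b • lp.single 2 j 1 : ℓ²) n
      = (if n = i then a else 0) + (if n = j then b else 0) := by
  simp only [lp.coeFn_add, lp.coeFn_smul, Pi.add_apply, Pi.smul_apply, lp.single_apply,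
    Pi.single_apply, smul_eq_mul, mul_ite, mul_one, mul_zero]

def IsUnilateralShift (S : ℓ² →L[ℂ] ℓ²) : Prop :=
  ∀ n : ℕ, S (lp.single 2 n (1 : ℂ)) = lp.single 2 (n + 1) (1 : ℂ)

namespace IsUnilateralShift

variable {S : ℓ² →L[ℂ] ℓ²}

theorem adjoint_apply (hS : IsUnilateralShift S) (x : ℓ²) (n : ℕ) :
    adjoint S x n = x (n + 1) := by
  rw [← lp.inner_single_one_left, adjoint_inner_right, hS, lp.inner_single_one_left]

theorem apply_zero (hS : IsUnilateralShift S) (x : ℓ²) : S x 0 = 0 := by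
  have h : adjoint S (lp.single 2 0 1) = 0 := by
    ext m
    simp [hS.adjoint_apply, lp.single_apply]
  rw [← lp.inner_single_one_left, ← adjoint_inner_left, h, inner_zero_left]

theorem apply_succ (hS : IsUnilateralShift S) (x : ℓ²) (n : ℕ) : S x (n + 1) = x n := by
  have h : adjoint S (lp.single 2 (n + 1) 1) = lp.single 2 n 1 := by
    ext m
    simp [hS.adjoint_apply, lp.single_apply, Pi.single_apply]
  rw [← lp.inner_single_one_left, ← adjoint_inner_left, h, lp.inner_single_one_left]

theorem apply_eq_zero (hS : IsUnilateralShift S) {x : ℓ²} {n : ℕ} (hx : ∀ i < n, x i = 0) :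
    ∀ i < n + 1, S x i = 0
  | 0, _ => hS.apply_zero x
  | i + 1, hi => (hS.apply_succ x i).trans (hx i (by omega))

theorem sq_add_rankOne_apply_eq_zero (hS : IsUnilateralShift S) {f : ℓ²} (hf : f 0 = 0)
    {x : ℓ²} {n : ℕ} (hx : ∀ i < n, x i = 0) :
    ∀ i < n + 1, (S ^ 2 + rankOne f (lp.single 2 0 1)) x i = 0 := by
  intro i hi
  have hSS : S (S x) i = 0 := hS.apply_eq_zero (hS.apply_eq_zero hx) i (by omega)
  rw [add_apply, rankOne_apply, lp.inner_single_one_left, pow_two,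
    mul_apply_eq_comp, lp.coeFn_add, Pi.add_apply, hSS, zero_add, lp.coeFn_smul,
    Pi.smul_apply, smul_eq_mul]
  rcases i with _ | i
  · rw [hf, mul_zero]
  · rw [hx 0 (by omega), zero_mul]

theorem adjoint_sq_apply (hS : IsUnilateralShift S) (x : ℓ²) (n : ℕ) :
    adjoint (S ^ 2 : ℓ² →L[ℂ] ℓ²) x n = x (n + 2) := by
  rw [pow_two, mul_def, adjoint_comp, comp_apply, hS.adjoint_apply, hS.adjoint_apply]

theorem perturbationConstant_sq (hS : IsUnilateralShift S) (α β : ℂ) :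
    perturbationConstant (S ^ 2) (α • lp.single 2 1 (1 : ℂ) + (β - 1) • lp.single 2 2 (1 : ℂ))
      (lp.single 2 0 1) = ‖α‖ ^ 2 + ‖β‖ ^ 2 := by
  have hadj : adjoint (S ^ 2) (α • lp.single 2 1 (1 : ℂ) + (β - 1) • lp.single 2 2 (1 : ℂ))
      = (β - 1) • lp.single 2 0 1 := by
    ext m
    rw [hS.adjoint_sq_apply, lp.smul_single_add_smul_single_apply]
    simp [lp.single_apply, Pi.single_apply]
  have horth : ⟪α • (lp.single 2 1 (1 : ℂ) : ℓ²), (β - 1) • lp.single 2 2 (1 : ℂ)⟫_ℂ = 0 := by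
    simp [lp.inner_single_one_left]
  have hnorm : ‖(α • lp.single 2 1 (1 : ℂ) + (β - 1) • lp.single 2 2 (1 : ℂ) : ℓ²)‖ ^ 2
      = ‖α‖ ^ 2 + ‖β - 1‖ ^ 2 := by
    have hpyth := norm_add_sq_eq_norm_sq_add_norm_sq_of_inner_eq_zero _ _ horth
    simp only [norm_smul, lp.norm_single_one, mul_one] at hpyth
    linear_combination hpyth
  rw [perturbationConstant, hadj, hnorm, norm_smul, lp.norm_single_one, inner_smul_right,
    lp.inner_single_one_left]
  simp

theorem iInter_range_pow_sq_add_rankOne (hS : IsUnilateralShift S) {f : ℓ²} (hf : f 0 = 0) :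
    ⋂ k, Set.range ⇑((S ^ 2 + rankOne f (lp.single 2 0 1)) ^ k) = {0} := by
  simp only [FunLike.coe_pow_eq_iterate]
  exact lp.iInter_range_iterate_eq_singleton_zero _ fun _ _ ↦ hS.sq_add_rankOne_apply_eq_zero hf

end IsUnilateralShift

/-- **Example.** On `H = ℓ²(ℕ, ℂ)` with standard basis `e_n = single n 1`, let
`S` be the unilateral right shift (`S e_n = e_{n+1}`), `(α, β) ≠ (0,0)`,
`f = α e₁ + (β − 1) e₂`, `g = e₀`, and `V = S²`. Then
`c(V; f, g) = |α|² + |β|²`, so `T = S² + f ⊗ g` is left-invertible; moreover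
`T` is analytic. -/
theorem hardy_square_shift_example
    (S : lp (fun _ : ℕ => ℂ) 2 →L[ℂ] lp (fun _ : ℕ => ℂ) 2)
    (hS : ∀ n : ℕ, S (lp.single 2 n (1 : ℂ)) = lp.single 2 (n + 1) (1 : ℂ))
    (hiso : (adjoint S) ∘L S = 1)
    (α β : ℂ) (hαβ : (α, β) ≠ (0, 0))
    (f g : lp (fun _ : ℕ => ℂ) 2)
    (hf : f = α • lp.single 2 1 (1 : ℂ) + (β - 1) • lp.single 2 2 (1 : ℂ))
    (hg : g = lp.single 2 0 (1 : ℂ)) :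
    ((‖f‖ ^ 2 - ‖adjoint (S ^ 2) f‖ ^ 2) * ‖g‖ ^ 2
        + ‖(1 : ℂ) + (inner ℂ g (adjoint (S ^ 2) f) : ℂ)‖ ^ 2
        = ‖α‖ ^ 2 + ‖β‖ ^ 2)
      ∧ (∃ L : lp (fun _ : ℕ => ℂ) 2 →L[ℂ] lp (fun _ : ℕ => ℂ) 2,
          L ∘L (S ^ 2 + rankOne f g) = 1)
      ∧ (⋂ k : ℕ, Set.range ⇑((S ^ 2 + rankOne f g) ^ k)) = {0} := by
  subst hf hg
  have hc := IsUnilateralShift.perturbationConstant_sq hS α β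
  have hc_ne : ‖α‖ ^ 2 + ‖β‖ ^ 2 ≠ 0 := by
    contrapose! hαβ
    obtain ⟨hα, hβ⟩ := (add_eq_zero_iff_of_nonneg (sq_nonneg _) (sq_nonneg _)).mp hαβ
    simp_all
  refine ⟨hc, exists_leftInverse_add_rankOne (adjoint_sq_comp_sq hiso) (hc ▸ hc_ne), ?_⟩
  exact IsUnilateralShift.iInter_range_pow_sq_add_rankOne hS
    (by simp [lp.smul_single_add_smul_single_apply])
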